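/- There exists a fair division instance with 3 agents having identical binary-marginal XOS valuations (on 6 goods) where APS ≥ 2·MMS: specifically v(S) = max(|S ∩ {1,2,3}|, |S ∩ {4,5,6}|) has MMS = 1 over 3 agents and APS ≥ 2. -/
import Mathlib

open Finset

def IsXOS (m : ℕ) (v : Finset (Fin m) → ℝ) : Prop :=
  ∃ F : Set (Fin m → ℝ), F.Nonempty ∧ (∀ f ∈ F, ∀ g, 0 ≤ f g) ∧
    (∀ S : Finset (Fin m), ∃ f ∈ F, v S = ∑ g ∈ S, f g) ∧
    (∀ f ∈ F, ∀ S : Finset (Fin m), ∑ g ∈ S, f g ≤ v S)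

def BinaryMarginals (m : ℕ) (v : Finset (Fin m) → ℝ) : Prop :=
  ∀ S : Finset (Fin m), ∀ g : Fin m,
    v (insert g S) - v S = 0 ∨ v (insert g S) - v S = 1

def IsPartition (m n : ℕ) (A : Fin n → Finset (Fin m)) : Prop :=
  (∀ i j : Fin n, i ≠ j → Disjoint (A i) (A j)) ∧
    Finset.univ.biUnion A = (Finset.univ : Finset (Fin m))

def IsMMS (m n : ℕ) (v : Finset (Fin m) → ℝ) (μ : ℝ) : Prop :=
  (∃ A : Fin n → Finset (Fin m), IsPartition m n A ∧ ∀ j, μ ≤ v (A j)) ∧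
  (∀ A : Fin n → Finset (Fin m), IsPartition m n A → ∃ j, v (A j) ≤ μ)

def IsAPS (m n : ℕ) (v : Finset (Fin m) → ℝ) (a : ℝ) : Prop :=
  (∃ p : Fin m → ℝ, (∀ g, 0 ≤ p g) ∧ (∑ g, p g = 1) ∧
    ∀ S : Finset (Fin m), (∑ g ∈ S, p g) ≤ 1 / n → v S ≤ a) ∧
  (∀ p : Fin m → ℝ, (∀ g, 0 ≤ p g) → (∑ g, p g = 1) →
    ∃ S : Finset (Fin m), (∑ g ∈ S, p g) ≤ 1 / n ∧ a ≤ v S)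

noncomputable def v6 : Finset (Fin 6) → ℝ := fun S =>
  max ((S ∩ ({0, 1, 2} : Finset (Fin 6))).card : ℝ)
      ((S ∩ ({3, 4, 5} : Finset (Fin 6))).card : ℝ)

lemma v6_eq (S : Finset (Fin 6)) :
    v6 S = ((max (S ∩ ({0,1,2} : Finset (Fin 6))).card (S ∩ ({3,4,5} : Finset (Fin 6))).card : ℕ) : ℝ) := by
  simp [v6, Nat.cast_max]

lemma bm_nat : ∀ (S : Finset (Fin 6)) (g : Fin 6),
    (max ((insert g S ∩ ({0,1,2} : Finset (Fin 6))).card) ((insert g S ∩ ({3,4,5} : Finset (Fin 6))).card))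
      = (max ((S ∩ ({0,1,2} : Finset (Fin 6))).card) ((S ∩ ({3,4,5} : Finset (Fin 6))).card)) ∨
    (max ((insert g S ∩ ({0,1,2} : Finset (Fin 6))).card) ((insert g S ∩ ({3,4,5} : Finset (Fin 6))).card))
      = (max ((S ∩ ({0,1,2} : Finset (Fin 6))).card) ((S ∩ ({3,4,5} : Finset (Fin 6))).card)) + 1 := by
  decide

def A3 : Fin 3 → Finset (Fin 6) := ![{0,3},{1,4},{2,5}]
def T6 : Fin 6 → Finset (Fin 6) := ![{0,1},{0,2},{1,2},{3,4},{3,5},{4,5}]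

lemma A3_val : ∀ j, 1 ≤ max ((A3 j ∩ ({0,1,2} : Finset (Fin 6))).card)
    ((A3 j ∩ ({3,4,5} : Finset (Fin 6))).card) := by decide

lemma T6_val : ∀ k, 2 ≤ max ((T6 k ∩ ({0,1,2} : Finset (Fin 6))).card)
    ((T6 k ∩ ({3,4,5} : Finset (Fin 6))).card) := by decide

lemma T6_card : ∀ g : Fin 6, (Finset.univ.filter (fun k => g ∈ T6 k)).card = 2 := by decide

lemma sum_ind (A : Finset (Fin 6)) (S : Finset (Fin 6)) :
    ∑ g ∈ S, (if g ∈ A then (1:ℝ) else 0) = ((S ∩ A).card : ℝ) := by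
  rw [Finset.sum_ite_mem, Finset.sum_const, nsmul_eq_mul, mul_one]

theorem exists_instance_aps_ge_two_mms :
    IsXOS 6 v6 ∧ BinaryMarginals 6 v6 ∧ IsMMS 6 3 v6 1 ∧
    ∃ (K : ℕ) (T : Fin K → Finset (Fin 6)) (w : Fin K → ℝ),
      (∀ k, 0 ≤ w k) ∧
      (∑ k, w k = 1) ∧
      (∀ k, (2 : ℝ) ≤ v6 (T k)) ∧
      (∀ g : Fin 6,
        (∑ k ∈ Finset.univ.filter (fun k => g ∈ T k), w k) ≤ 1 / 3) := by
  refine ⟨?_, ?_, ⟨?_, ?_⟩, ?_⟩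
  · -- XOS
    refine ⟨{fun g => if g ∈ ({0,1,2} : Finset (Fin 6)) then (1:ℝ) else 0,
             fun g => if g ∈ ({3,4,5} : Finset (Fin 6)) then (1:ℝ) else 0},
      ⟨_, Set.mem_insert _ _⟩, ?_, ?_, ?_⟩
    · rintro f (rfl | rfl) g <;> positivity
    · intro S
      rcases max_cases ((S ∩ ({0,1,2} : Finset (Fin 6))).card : ℝ)
        ((S ∩ ({3,4,5} : Finset (Fin 6))).card : ℝ) with ⟨h, _⟩ | ⟨h, _⟩
      · exact ⟨_, Set.mem_insert _ _, by rw [v6, h, sum_ind]⟩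
      · exact ⟨_, Set.mem_insert_of_mem _ rfl, by rw [v6, h, sum_ind]⟩
    · rintro f (rfl | rfl) S
      · rw [sum_ind]; exact le_max_left _ _
      · rw [sum_ind]; exact le_max_right _ _
  · -- BinaryMarginals
    intro S g
    rcases bm_nat S g with h | h
    · left; rw [v6_eq, v6_eq, h]; ring
    · right; rw [v6_eq, v6_eq, h]; push_cast; ring
  · -- MMS lower
    refine ⟨A3, ⟨by decide, by decide⟩, ?_⟩
    · intro j
      rw [v6_eq]
      exact_mod_cast A3_val j
  · -- MMS upper
    intro A hA
    by_contra hc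
    push_neg at hc
    have key : ∀ (T : Finset (Fin 6)), ∑ j, (A j ∩ T).card = T.card := by
      intro T
      rw [← Finset.card_biUnion fun i _ j _ hij =>
            (hA.1 i j hij).mono inter_subset_left inter_subset_left,
          ← Finset.biUnion_inter, hA.2, univ_inter]
    have h1 := key {0,1,2}
    have h2 := key {3,4,5}
    have hj : ∀ j, 2 ≤ (A j ∩ ({0,1,2} : Finset (Fin 6))).card ∨
        2 ≤ (A j ∩ ({3,4,5} : Finset (Fin 6))).card := by
      intro j
      have := hc j
      rw [v6_eq] at this
      have h2' : 2 ≤ max (A j ∩ ({0,1,2} : Finset (Fin 6))).card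
          (A j ∩ ({3,4,5} : Finset (Fin 6))).card := by
        by_contra hcc
        push_neg at hcc
        have : ((max (A j ∩ ({0,1,2} : Finset (Fin 6))).card
            (A j ∩ ({3,4,5} : Finset (Fin 6))).card : ℕ) : ℝ) ≤ 1 := by
          exact_mod_cast Nat.lt_succ_iff.mp hcc
        linarith
      exact le_max_iff.mp h2'
    rw [Fin.sum_univ_three, show (({0,1,2} : Finset (Fin 6))).card = 3 from by decide] at h1
    rw [Fin.sum_univ_three, show (({3,4,5} : Finset (Fin 6))).card = 3 from by decide] at h2
    rcases hj 0 with h | h <;> rcases hj 1 with h' | h' <;> rcases hj 2 with h'' | h'' <;> omega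
  · -- APS part
    refine ⟨6, T6, fun _ => 1/6, fun _ => by norm_num, ?_, ?_, ?_⟩
    · rw [Fin.sum_univ_six]; norm_num
    · intro k
      rw [v6_eq]
      exact_mod_cast T6_val k
    · intro g
      rw [Finset.sum_const, nsmul_eq_mul, T6_card g]
      norm_num
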